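/- arXiv:1407.1706 — 5 statements merged into one kernel-verified Lean document; each statement's English description precedes it below -/
import Mathlib

section
/- Let p, k ≥ 2 be integers and let G be a simple graph of girth at least 2p. If G has at least k·(k^(1/(p-1)) + 2) vertices, then G has an independent set of size at least k. -/
open SimpleGraph Walk

private theorem aux_two_paths' {V : Type*} {G : SimpleGraph V} :
    ∀ (n : ℕ) {u v : V} (P1 P2 : G.Walk u v), 2 * P1.length + P2.length ≤ n →
      P1.IsPath → P2.IsPath → P1 ≠ P2 →
      ∃ (w : V) (c : G.Walk w w), c.IsCycle ∧ c.length ≤ P1.length + P2.length := by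
  intro n
  induction n using Nat.strong_induction_on with
  | _ n ih =>
  intro u v P1 P2 hn h1 h2 hne
  classical
  cases P1 with
  | nil =>
    exact absurd ((Walk.isPath_iff_eq_nil (p := P2)).mp h2).symm hne
  | cons h1' Q1 =>
    rename_i a
    cases P2 with
    | nil =>
      exact absurd ((Walk.isPath_iff_eq_nil (p := _)).mp h1) (by simp)
    | cons h2' Q2 =>
      rename_i b
      by_cases hab : a = b
      · subst hab
        have hQne : Q1 ≠ Q2 := fun h => hne (by rw [h])
        obtain ⟨w, c, hc, hlen⟩ := ih (2 * Q1.length + Q2.length)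
          (by simp [Walk.length_cons] at hn ⊢; omega) Q1 Q2 le_rfl h1.of_cons h2.of_cons hQne
        exact ⟨w, c, hc, by simp [Walk.length_cons]; omega⟩
      · set P2 : G.Walk u v := Walk.cons h2' Q2 with hP2def
        by_cases hmem : a ∈ P2.support
        · -- terminal case
          refine ⟨u, Walk.cons h1' (P2.takeUntil a hmem).reverse, ?_, ?_⟩
          · rw [Walk.cons_isCycle_iff]
            refine ⟨(h2.takeUntil hmem).reverse, ?_⟩
            rw [Walk.edges_reverse, List.mem_reverse]
            intro hin
            have hin' := Walk.edges_takeUntil_subset P2 hmem hin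
            rw [hP2def] at hin'
            simp only [Walk.edges_cons, List.mem_cons] at hin'
            rcases hin' with h' | h'
            · rcases (by simpa using h' : a = b ∨ u = b ∧ a = u) with h | ⟨_, hau⟩
              · exact hab h
              · subst hau; exact G.irrefl h1'
            · have := Walk.fst_mem_support_of_mem_edges Q2 h'
              exact ((Walk.cons_isPath_iff _ _).mp h2).2 this
          · have := Walk.length_takeUntil_le P2 hmem
            simp only [Walk.length_cons, Walk.length_reverse]
            omega
        · -- recursive case
          have hQ1path : Q1.IsPath := h1.of_cons
          have hP2'path : (Walk.cons h1'.symm P2).IsPath :=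
            (Walk.cons_isPath_iff _ _).mpr ⟨h2, hmem⟩
          have hne' : Q1 ≠ Walk.cons h1'.symm P2 := by
            intro h
            have : u ∈ Q1.support := by rw [h]; simp
            exact ((Walk.cons_isPath_iff _ _).mp h1).2 this
          obtain ⟨w, c, hc, hlen⟩ := ih (n - 1) (by simp [Walk.length_cons] at hn; omega)
            Q1 (Walk.cons h1'.symm P2)
            (by simp [Walk.length_cons] at hn ⊢; omega) hQ1path hP2'path hne'
          exact ⟨w, c, hc, by simp [Walk.length_cons] at hlen ⊢; omega⟩

private theorem aux_two_paths {V : Type*} {G : SimpleGraph V} {u v : V} (P1 P2 : G.Walk u v)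
    (h1 : P1.IsPath) (h2 : P2.IsPath) (hne : P1 ≠ P2) :
    ∃ (w : V) (c : G.Walk w w), c.IsCycle ∧ c.length ≤ P1.length + P2.length :=
  aux_two_paths' _ P1 P2 le_rfl h1 h2 hne


section BFS
variable {V : Type*} [DecidableEq V]

def bfs (G : SimpleGraph V) [DecidableRel G.Adj] (R : Finset V) (v : V) : ℕ → Finset V × Finset V
  | 0 => ({v}, {v})
  | i+1 =>
    let q := bfs G R v i
    let a := R.filter fun w => w ∉ q.2 ∧ ∃ x ∈ q.1, G.Adj x w
    (a, q.2 ∪ a)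

variable (G : SimpleGraph V) [DecidableRel G.Adj] (R : Finset V) (v : V)

lemma bfs_zero : bfs G R v 0 = ({v}, {v}) := rfl

lemma mem_bfsA_succ {w : V} {i : ℕ} :
    w ∈ (bfs G R v (i+1)).1 ↔ w ∈ R ∧ w ∉ (bfs G R v i).2 ∧ ∃ x ∈ (bfs G R v i).1, G.Adj x w := by
  simp [bfs, Finset.mem_filter]

lemma bfsB_succ (i : ℕ) : (bfs G R v (i+1)).2 = (bfs G R v i).2 ∪ (bfs G R v (i+1)).1 := rfl

lemma bfsA_subset_B (i : ℕ) : (bfs G R v i).1 ⊆ (bfs G R v i).2 := by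
  cases i with
  | zero => exact subset_rfl
  | succ i => rw [bfsB_succ]; exact Finset.subset_union_right

lemma bfsB_mono {i j : ℕ} (h : i ≤ j) : (bfs G R v i).2 ⊆ (bfs G R v j).2 := by
  induction j with
  | zero => obtain rfl : i = 0 := Nat.le_zero.mp h; exact subset_rfl
  | succ j ihj =>
    rcases Nat.lt_or_ge i (j+1) with h' | h'
    · exact (ihj (by omega)).trans (by rw [bfsB_succ]; exact Finset.subset_union_left)
    · obtain rfl : i = j + 1 := by omega
      exact subset_rfl

lemma bfsA_disj {i j : ℕ} (h : j < i) {w : V} (hw : w ∈ (bfs G R v i).1) :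
    w ∉ (bfs G R v j).2 := by
  obtain ⟨i, rfl⟩ : ∃ m, i = m + 1 := ⟨i - 1, by omega⟩
  have := ((mem_bfsA_succ G R v).mp hw).2.1
  exact fun hc => this (bfsB_mono G R v (by omega) hc)

lemma mem_bfsB_iff {w : V} {i : ℕ} : w ∈ (bfs G R v i).2 ↔ ∃ j ≤ i, w ∈ (bfs G R v j).1 := by
  induction i with
  | zero =>
    constructor
    · intro h; exact ⟨0, le_rfl, h⟩
    · rintro ⟨j, hj, h⟩
      obtain rfl : j = 0 := Nat.le_zero.mp hj
      simpa [bfs_zero] using h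
  | succ i ih =>
    rw [bfsB_succ, Finset.mem_union, ih]
    constructor
    · rintro (⟨j, hj, h⟩ | h)
      · exact ⟨j, by omega, h⟩
      · exact ⟨i+1, le_rfl, h⟩
    · rintro ⟨j, hj, h⟩
      rcases Nat.lt_or_ge j (i+1) with h' | h'
      · exact Or.inl ⟨j, by omega, h⟩
      · obtain rfl : j = i + 1 := by omega
        exact Or.inr h

lemma bfsA_subset_R (hv : v ∈ R) (i : ℕ) : (bfs G R v i).1 ⊆ R := by
  cases i with
  | zero =>
    intro w hw
    obtain rfl : w = v := by simpa [bfs_zero] using hw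
    exact hv
  | succ i => intro w hw; exact ((mem_bfsA_succ G R v).mp hw).1

lemma nbr_mem_bfsB {x w : V} {i : ℕ} (hx : x ∈ (bfs G R v i).1) (hw : w ∈ R)
    (hadj : G.Adj x w) : w ∈ (bfs G R v (i+1)).2 := by
  rw [bfsB_succ, Finset.mem_union]
  by_cases h : w ∈ (bfs G R v i).2
  · exact Or.inl h
  · exact Or.inr ((mem_bfsA_succ G R v).mpr ⟨hw, h, x, hx, hadj⟩)

lemma bfs_path {i : ℕ} {w : V} (hw : w ∈ (bfs G R v i).1) :
    ∃ P : G.Walk w v, P.IsPath ∧ P.length = i ∧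
      ∀ x ∈ P.support, x = w ∨ ∃ j, j < i ∧ x ∈ (bfs G R v j).1 := by
  induction i generalizing w with
  | zero =>
    obtain rfl : w = v := by simpa [bfs_zero] using hw
    exact ⟨SimpleGraph.Walk.nil, SimpleGraph.Walk.IsPath.nil, rfl, by simp⟩
  | succ i ih =>
    obtain ⟨_, hnB, x, hx, hadj⟩ := (mem_bfsA_succ G R v).mp hw
    obtain ⟨P', hP'path, hP'len, hP'supp⟩ := ih hx
    refine ⟨SimpleGraph.Walk.cons hadj.symm P', ?_, by simp [hP'len], ?_⟩
    · rw [SimpleGraph.Walk.cons_isPath_iff]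
      refine ⟨hP'path, fun hmem => ?_⟩
      rcases hP'supp w hmem with rfl | ⟨j, hj, hwj⟩
      · exact hnB (bfsA_subset_B G R v i hx)
      · exact hnB (bfsB_mono G R v (by omega) (bfsA_subset_B G R v j hwj))
    · intro y hy
      rw [SimpleGraph.Walk.support_cons, List.mem_cons] at hy
      rcases hy with rfl | hy
      · exact Or.inl rfl
      · rcases hP'supp y hy with rfl | ⟨j, hj, hyj⟩
        · exact Or.inr ⟨i, by omega, hx⟩
        · exact Or.inr ⟨j, by omega, hyj⟩

end BFS

section Girth
variable {V : Type*} [DecidableEq V] (G : SimpleGraph V) [DecidableRel G.Adj] (R : Finset V) (v : V)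
variable {p d : ℕ} (hp : 2 ≤ p)
variable (hshort : ∀ (w : V) (c : G.Walk w w), c.IsCycle → 2 * p ≤ c.length)

include hp hshort in
lemma bfsA_no_adj {i : ℕ} (hi : i ≤ p - 1) {x y : V} (hx : x ∈ (bfs G R v i).1)
    (hy : y ∈ (bfs G R v i).1) : ¬ G.Adj x y := by
  intro hadj
  have hxy : x ≠ y := G.ne_of_adj hadj
  cases i with
  | zero =>
    have hx' : x = v := by simpa [bfs_zero] using hx
    have hy' : y = v := by simpa [bfs_zero] using hy
    exact hxy (hx'.trans hy'.symm)
  | succ m =>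
    obtain ⟨Px, hPxp, hPxl, _⟩ := bfs_path G R v hx
    obtain ⟨Py, hPyp, hPyl, hPys⟩ := bfs_path G R v hy
    have hxs : x ∉ Py.support := by
      intro hmem
      rcases hPys x hmem with rfl | ⟨j, hj, hxj⟩
      · exact hxy rfl
      · exact bfsA_disj G R v hj hx (bfsA_subset_B G R v j hxj)
    have hP1 : (SimpleGraph.Walk.cons hadj Py).IsPath :=
      (SimpleGraph.Walk.cons_isPath_iff _ _).mpr ⟨hPyp, hxs⟩
    have hne : SimpleGraph.Walk.cons hadj Py ≠ Px := by
      intro h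
      have := congrArg SimpleGraph.Walk.length h
      simp [hPxl, hPyl] at this
    obtain ⟨w, c, hc, hlen⟩ := aux_two_paths _ _ hP1 hPxp hne
    have h2p := hshort w c hc
    simp [hPxl, hPyl] at hlen
    omega

include hp hshort in
lemma bfsA_unique_parent {i : ℕ} (hi : i + 1 ≤ p - 1) {u x y : V}
    (hu : u ∈ (bfs G R v (i+1)).1) (hx : x ∈ (bfs G R v i).1) (hy : y ∈ (bfs G R v i).1)
    (hxu : G.Adj x u) (hyu : G.Adj y u) : x = y := by
  by_contra hxy
  obtain ⟨Px, hPxp, hPxl, hPxs⟩ := bfs_path G R v hx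
  obtain ⟨Py, hPyp, hPyl, hPys⟩ := bfs_path G R v hy
  have husx : u ∉ Px.support := by
    intro hmem
    rcases hPxs u hmem with rfl | ⟨j, hj, huj⟩
    · exact (bfsA_disj G R v (Nat.lt_succ_self i) hu) (bfsA_subset_B G R v i hx)
    · exact (bfsA_disj G R v (by omega) hu) (bfsA_subset_B G R v j huj)
  have husy : u ∉ Py.support := by
    intro hmem
    rcases hPys u hmem with rfl | ⟨j, hj, huj⟩
    · exact (bfsA_disj G R v (Nat.lt_succ_self i) hu) (bfsA_subset_B G R v i hy)
    · exact (bfsA_disj G R v (by omega) hu) (bfsA_subset_B G R v j huj)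
  have hP1 : (SimpleGraph.Walk.cons hxu.symm Px).IsPath :=
    (SimpleGraph.Walk.cons_isPath_iff _ _).mpr ⟨hPxp, husx⟩
  have hP2 : (SimpleGraph.Walk.cons hyu.symm Py).IsPath :=
    (SimpleGraph.Walk.cons_isPath_iff _ _).mpr ⟨hPyp, husy⟩
  have hne : SimpleGraph.Walk.cons hxu.symm Px ≠ SimpleGraph.Walk.cons hyu.symm Py := by
    intro h
    have := congrArg (fun q => q.getVert 1) h
    simp only [SimpleGraph.Walk.getVert_cons_succ, SimpleGraph.Walk.getVert_zero] at this
    exact hxy this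
  obtain ⟨w, c, hc, hlen⟩ := aux_two_paths _ _ hP1 hP2 hne
  have h2p := hshort w c hc
  simp [hPxl, hPyl] at hlen
  omega

include hp hshort in
lemma bfs_key2 {i : ℕ} (hi : i + 1 ≤ p - 1) {u : V} (hu : u ∈ (bfs G R v (i+1)).1) :
    ((bfs G R v i).1.filter (fun x => G.Adj x u)).card ≤ 1 := by
  refine Finset.card_le_one.mpr fun x hx y hy => ?_
  rw [Finset.mem_filter] at hx hy
  exact bfsA_unique_parent G R v hp hshort hi hu hx.1 hy.1 hx.2 hy.2

include hp hshort in
lemma bfs_key1 (hv : v ∈ R) (hmin : ∀ x ∈ R, d + 1 ≤ (R.filter (G.Adj x)).card)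
    {i : ℕ} (hi : i + 1 ≤ p - 1) {x : V} (hx : x ∈ (bfs G R v i).1) :
    d ≤ ((bfs G R v (i+1)).1.filter (fun w => G.Adj x w)).card := by
  set N := R.filter (G.Adj x) with hNdef
  have hxR : x ∈ R := bfsA_subset_R G R v hv i hx
  have hN : d + 1 ≤ N.card := hmin x hxR
  have hsplit : (N.filter (fun w => w ∈ (bfs G R v (i+1)).1)).card
      + (N.filter (fun w => ¬ w ∈ (bfs G R v (i+1)).1)).card = N.card :=
    Finset.card_filter_add_card_filter_not _
  have h2 : (N.filter (fun w => ¬ w ∈ (bfs G R v (i+1)).1)).card ≤ 1 := by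
    have hmem' : ∀ w ∈ N.filter (fun w => ¬ w ∈ (bfs G R v (i+1)).1),
        1 ≤ i ∧ w ∈ (bfs G R v (i-1)).1 := by
      intro w hw
      rw [Finset.mem_filter, hNdef, Finset.mem_filter] at hw
      obtain ⟨⟨hwR, hadj⟩, hwnA⟩ := hw
      have hwB : w ∈ (bfs G R v (i+1)).2 := nbr_mem_bfsB G R v hx hwR hadj
      rw [bfsB_succ, Finset.mem_union] at hwB
      rcases hwB with hwB | hwB
      swap
      · exact absurd hwB hwnA
      obtain ⟨j, hj, hwj⟩ := (mem_bfsB_iff G R v).mp hwB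
      have hjne : j ≠ i := by
        rintro rfl
        exact bfsA_no_adj G R v hp hshort (by omega) hx hwj hadj
      have hxB : x ∈ (bfs G R v (j+1)).2 := nbr_mem_bfsB G R v hwj hxR hadj.symm
      have hji : i ≤ j + 1 := by
        by_contra hc
        exact bfsA_disj G R v (by omega) hx hxB
      obtain rfl : j = i - 1 := by omega
      exact ⟨by omega, hwj⟩
    refine Finset.card_le_one.mpr fun w1 hw1 w2 hw2 => ?_
    obtain ⟨hi1, hw1'⟩ := hmem' w1 hw1
    obtain ⟨_, hw2'⟩ := hmem' w2 hw2
    rw [Finset.mem_filter, hNdef, Finset.mem_filter] at hw1 hw2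
    have hxA : x ∈ (bfs G R v ((i-1)+1)).1 := by
      rwa [Nat.sub_add_cancel hi1]
    exact bfsA_unique_parent G R v hp hshort (by omega) hxA hw1' hw2'
      hw1.1.2.symm hw2.1.2.symm
  have hsub : N.filter (fun w => w ∈ (bfs G R v (i+1)).1)
      ⊆ (bfs G R v (i+1)).1.filter (fun w => G.Adj x w) := by
    intro w hw
    rw [Finset.mem_filter] at hw ⊢
    rw [hNdef, Finset.mem_filter] at hw
    exact ⟨hw.2, hw.1.2⟩
  have := Finset.card_le_card hsub
  omega

include hp hshort in
lemma bfs_growth_step (hv : v ∈ R) (hmin : ∀ x ∈ R, d + 1 ≤ (R.filter (G.Adj x)).card)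
    {i : ℕ} (hi : i + 1 ≤ p - 1) :
    d * (bfs G R v i).1.card ≤ (bfs G R v (i+1)).1.card := by
  calc d * (bfs G R v i).1.card = ∑ _x ∈ (bfs G R v i).1, d := by
        rw [Finset.sum_const, smul_eq_mul, mul_comm]
    _ ≤ ∑ x ∈ (bfs G R v i).1, ((bfs G R v (i+1)).1.filter (fun w => G.Adj x w)).card :=
        Finset.sum_le_sum fun x hx => bfs_key1 G R v hp hshort hv hmin hi hx
    _ = ∑ x ∈ (bfs G R v i).1, ∑ u ∈ (bfs G R v (i+1)).1, if G.Adj x u then 1 else 0 := by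
        refine Finset.sum_congr rfl fun x _ => ?_
        rw [Finset.card_filter]
    _ = ∑ u ∈ (bfs G R v (i+1)).1, ∑ x ∈ (bfs G R v i).1, if G.Adj x u then 1 else 0 :=
        Finset.sum_comm
    _ = ∑ u ∈ (bfs G R v (i+1)).1, ((bfs G R v i).1.filter (fun x => G.Adj x u)).card := by
        refine Finset.sum_congr rfl fun u _ => ?_
        rw [Finset.card_filter]
    _ ≤ ∑ _u ∈ (bfs G R v (i+1)).1, 1 :=
        Finset.sum_le_sum fun u hu => bfs_key2 G R v hp hshort hi hu
    _ = (bfs G R v (i+1)).1.card := by simp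

include hp hshort in
lemma bfs_card (hv : v ∈ R) (hmin : ∀ x ∈ R, d + 1 ≤ (R.filter (G.Adj x)).card) :
    ∀ i, 1 ≤ i → i ≤ p - 1 → d ^ i ≤ (bfs G R v i).1.card := by
  intro i
  induction i with
  | zero => omega
  | succ i ih =>
    intro _ hi
    by_cases hi0 : i = 0
    · subst hi0
      have h0 : (bfs G R v 0).1.card = 1 := by rw [bfs_zero]; simp
      have := bfs_growth_step G R v hp hshort hv hmin (i := 0) (by omega)
      rw [h0, mul_one] at this
      simpa using this
    · have h1 : 1 ≤ i := by omega
      have hii := ih h1 (by omega)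
      calc d ^ (i+1) = d * d ^ i := by ring
        _ ≤ d * (bfs G R v i).1.card := Nat.mul_le_mul_left d hii
        _ ≤ (bfs G R v (i+1)).1.card := bfs_growth_step G R v hp hshort hv hmin (by omega)

include hp hshort in
lemma bfs_big_indep (hv : v ∈ R) (hmin : ∀ x ∈ R, d + 1 ≤ (R.filter (G.Adj x)).card) :
    ∃ S : Finset V, (↑S : Set V).Pairwise (fun a b => ¬ G.Adj a b) ∧ d ^ (p-1) ≤ S.card := by
  refine ⟨(bfs G R v (p-1)).1, fun a ha b hb _ => ?_, ?_⟩
  · exact bfsA_no_adj G R v hp hshort le_rfl ha hb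
  · exact bfs_card G R v hp hshort hv hmin (p-1) (by omega) le_rfl

end Girth

section Greedy
variable {V : Type*} [DecidableEq V] (G : SimpleGraph V) [DecidableRel G.Adj]
variable {p d k : ℕ} (hp : 2 ≤ p)
variable (hshort : ∀ (w : V) (c : G.Walk w w), c.IsCycle → 2 * p ≤ c.length)
variable (hdk : k ≤ d ^ (p - 1))

include hp hshort hdk in
lemma greedy : ∀ (j : ℕ) (R : Finset V), j * (d+1) ≤ R.card →
    ∃ S : Finset V, (↑S : Set V).Pairwise (fun a b => ¬ G.Adj a b) ∧
      (k ≤ S.card ∨ (S ⊆ R ∧ j ≤ S.card)) := by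
  intro j
  induction j with
  | zero => intro R _; exact ⟨∅, by simp, Or.inr ⟨Finset.empty_subset R, Nat.zero_le _⟩⟩
  | succ j ih =>
    intro R hR
    rw [Nat.succ_mul] at hR
    by_cases hcase : ∀ x ∈ R, d + 1 ≤ (R.filter (G.Adj x)).card
    · have hRne : R.Nonempty := Finset.card_pos.mp (by omega)
      obtain ⟨v, hv⟩ := hRne
      obtain ⟨S, hS, hcard⟩ := bfs_big_indep G R v hp hshort hv hcase
      exact ⟨S, hS, Or.inl (hdk.trans hcard)⟩
    · push_neg at hcase
      obtain ⟨v, hvR, hvdeg⟩ := hcase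
      set R' := R \ insert v (R.filter (G.Adj v)) with hR'def
      have hsub : insert v (R.filter (G.Adj v)) ⊆ R :=
        Finset.insert_subset hvR (Finset.filter_subset _ _)
      have hcins : (insert v (R.filter (G.Adj v))).card ≤ d + 1 :=
        (Finset.card_insert_le _ _).trans (by omega)
      have hR'eq : R'.card = R.card - (insert v (R.filter (G.Adj v))).card :=
        Finset.card_sdiff_of_subset hsub
      have hR'card : j * (d+1) ≤ R'.card := by omega
      obtain ⟨S, hS, hcS⟩ := ih R' hR'card
      rcases hcS with h | ⟨hSR', hjS⟩
      · exact ⟨S, hS, Or.inl h⟩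
      · have hvS : v ∉ S := by
          intro h
          have := hSR' h
          rw [hR'def, Finset.mem_sdiff] at this
          exact this.2 (Finset.mem_insert_self _ _)
        have hnadj : ∀ y ∈ S, ¬ G.Adj v y := by
          intro y hy hadj
          have hyR' := hSR' hy
          rw [hR'def, Finset.mem_sdiff] at hyR'
          exact hyR'.2 (Finset.mem_insert.mpr
            (Or.inr (Finset.mem_filter.mpr ⟨hyR'.1, hadj⟩)))
        refine ⟨insert v S, ?_, Or.inr ⟨?_, ?_⟩⟩
        · rw [Finset.coe_insert]
          have hsym : Symmetric (fun a b : V => ¬ G.Adj a b) :=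
            fun a b h hadj => h hadj.symm
          haveI : Std.Symm (fun a b : V => ¬ G.Adj a b) := ⟨fun a b h => hsym h⟩
          rw [Set.pairwise_insert_of_symm]
          exact ⟨hS, fun y hy _ => hnadj y hy⟩
        · intro x hx
          rcases Finset.mem_insert.mp hx with rfl | hx
          · exact hvR
          · exact (hSR'.trans Finset.sdiff_subset) hx
        · rw [Finset.card_insert_of_notMem hvS]; omega

end Greedy

/-- A set of vertices is independent if its vertices are pairwise non-adjacent. -/
def SimpleGraph.IsIndepSet' {V : Type*} (G : SimpleGraph V) (s : Set V) : Prop :=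
  s.Pairwise fun u v => ¬ G.Adj u v

/-- Let `p, k ≥ 2` be integers and let `G` be a simple graph of girth at least `2p`.
If `G` has at least `k·(k^(1/(p-1)) + 2)` vertices, then `G` has an independent set of
size at least `k`. -/
theorem stmt0 {V : Type*} [Fintype V] (G : SimpleGraph V) (p k : ℕ)
    (hp : 2 ≤ p) (hk : 2 ≤ k)
    (hgirth : (2 * p : ℕ∞) ≤ G.egirth)
    (hcard : (k : ℝ) * ((k : ℝ) ^ ((1 : ℝ) / (p - 1 : ℝ)) + 2) ≤ Fintype.card V) :
    ∃ S : Finset V, G.IsIndepSet' ↑S ∧ k ≤ S.card := by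
  classical
  set r : ℝ := (k : ℝ) ^ ((1 : ℝ) / (p - 1 : ℝ)) with hrdef
  set d : ℕ := ⌈r⌉₊ with hddef
  have hp1 : (1:ℝ) ≤ (p:ℝ) - 1 := by
    have : (2:ℝ) ≤ (p:ℝ) := by exact_mod_cast hp
    linarith
  have hk0 : (0:ℝ) ≤ (k:ℝ) := Nat.cast_nonneg k
  have hr0 : 0 ≤ r := Real.rpow_nonneg hk0 _
  have hrpow : r ^ (p - 1 : ℕ) = (k : ℝ) := by
    rw [hrdef, ← Real.rpow_natCast ((k:ℝ) ^ ((1 : ℝ) / ((p:ℝ) - 1))) (p-1),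
      ← Real.rpow_mul hk0]
    have hcast : ((p - 1 : ℕ) : ℝ) = (p:ℝ) - 1 := by
      have h1 : (1:ℕ) ≤ p := by omega
      push_cast [h1]
      ring
    rw [hcast, one_div, inv_mul_cancel₀ (by linarith : (p:ℝ) - 1 ≠ 0), Real.rpow_one]
  have hdk : k ≤ d ^ (p - 1) := by
    have h1 : (k:ℝ) ≤ ((d:ℝ)) ^ (p-1:ℕ) := by
      rw [← hrpow]
      exact pow_le_pow_left₀ hr0 (Nat.le_ceil r) _
    have h2 : ((d ^ (p-1) : ℕ) : ℝ) = (d:ℝ) ^ (p-1:ℕ) := by push_cast; ring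
    rw [← h2] at h1
    exact_mod_cast h1
  have hbudget : k * (d + 1) ≤ Fintype.card V := by
    have hd1 : (d:ℝ) ≤ r + 1 := by
      have := Nat.ceil_lt_add_one hr0
      rw [← hddef] at this
      linarith
    have h3 : ((k * (d+1) : ℕ) : ℝ) ≤ (Fintype.card V : ℝ) := by
      push_cast
      calc (k:ℝ) * ((d:ℝ)+1) ≤ (k:ℝ) * (r + 2) := by nlinarith
        _ ≤ Fintype.card V := hcard
    exact_mod_cast h3
  have hshort : ∀ (w : V) (c : G.Walk w w), c.IsCycle → 2 * p ≤ c.length := by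
    intro w c hc
    have h4 := SimpleGraph.le_egirth.mp hgirth w c hc
    exact_mod_cast h4
  obtain ⟨S, hS, hcS⟩ := greedy G hp hshort hdk k Finset.univ
    (by simpa using hbudget)
  refine ⟨S, hS, ?_⟩
  rcases hcS with h | ⟨_, h⟩ <;> exact h
end

section
/- Let G be a simple graph of girth at least 2p with p ≥ 2, and suppose every vertex of G has degree at least d+1 for some real d ≥ 1. Fix a vertex v and for each i let N_i be the set of vertices at distance exactly i from v. Then for each i with 1 ≤ i ≤ p-1, the set N_i is an independent set in G and |N_i| ≥ d^(i-1)·(d+1). -/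
namespace MyGirthAux

open SimpleGraph Finset

variable {V : Type*} [DecidableEq V] {G : SimpleGraph V}

lemma endpoints_eq_of_length_zero {u w : V} (q : G.Walk u w) (h : q.length = 0) : u = w := by
  cases q with
  | nil => rfl
  | cons _ _ => simp [SimpleGraph.Walk.length_cons] at h

lemma isPath_concat {u v w : V} {p : G.Walk u v} (hp : p.IsPath) (h : G.Adj v w)
    (hw : w ∉ p.support) : (p.concat h).IsPath := by
  rw [← Walk.isPath_reverse_iff, Walk.reverse_concat, Walk.cons_isPath_iff]
  refine ⟨hp.reverse, ?_⟩
  rw [Walk.support_reverse, List.mem_reverse]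
  exact hw

lemma exists_cycle_of_two_paths :
    ∀ {u w : V} (p q : G.Walk u w), p.IsPath → q.IsPath → p ≠ q →
      ∃ (a : V) (c : G.Walk a a), c.IsCycle ∧ c.length ≤ p.length + q.length := by
  intro u w p
  induction p with
  | nil =>
    intro q _ hq hne
    exact absurd (Walk.isPath_iff_eq_nil.mp hq).symm hne
  | @cons u x w h p' ih =>
    intro q hp hq hne
    cases q with
    | nil =>
      exact absurd (Walk.isPath_iff_eq_nil.mp hp) (by simp)
    | @cons _ y _ h' q' =>
      by_cases hxy : x = y
      · subst hxy
        obtain ⟨a, c, hc, hlen⟩ := ih q' hp.of_cons hq.of_cons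
          (fun hpq => hne (by rw [hpq]))
        exact ⟨a, c, hc, by simp only [Walk.length_cons]; omega⟩
      · have hup : u ∉ p'.support := ((Walk.cons_isPath_iff _ _).mp hp).2
        have huq : u ∉ q'.support := ((Walk.cons_isPath_iff _ _).mp hq).2
        set r := (p'.append q'.reverse).bypass with hr
        have hrp : r.IsPath := Walk.bypass_isPath _
        have hur : u ∉ r.support := by
          intro hu
          have h1 := Walk.support_bypass_subset _ hu
          rw [Walk.mem_support_append_iff] at h1
          rcases h1 with h1 | h1
          · exact hup h1
          · rw [Walk.support_reverse, List.mem_reverse] at h1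
            exact huq h1
        refine ⟨u, Walk.cons h (r.concat h'.symm), ?_, ?_⟩
        · rw [Walk.cons_isCycle_iff]
          refine ⟨isPath_concat hrp h'.symm hur, ?_⟩
          intro he
          rw [Walk.edges_concat, List.concat_eq_append] at he
          rcases List.mem_append.mp he with h1 | h1
          · exact hur (Walk.fst_mem_support_of_mem_edges _ h1)
          · simp only [List.mem_singleton] at h1
            rcases Sym2.eq_iff.mp h1 with ⟨h2, _⟩ | ⟨_, h3⟩
            · exact h'.ne h2
            · exact hxy h3
        · have h1 : r.length ≤ p'.length + q'.length := by
            have h2 := Walk.length_bypass_le (p'.append q'.reverse)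
            rwa [Walk.length_append, Walk.length_reverse] at h2
          simp only [Walk.length_cons, Walk.length_concat]
          omega

lemma girth_bound {p : ℕ} (hg : (2 * p : ℕ∞) ≤ G.egirth) {u w : V} (pw qw : G.Walk u w)
    (hp : pw.IsPath) (hq : qw.IsPath) (hne : pw ≠ qw) : 2 * p ≤ pw.length + qw.length := by
  obtain ⟨a, c, hc, hlen⟩ := exists_cycle_of_two_paths pw qw hp hq hne
  have h1 : (2 * p : ℕ∞) ≤ (c.length : ℕ∞) := SimpleGraph.le_egirth.mp hg a c hc
  have h2 : 2 * p ≤ c.length := by exact_mod_cast h1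
  omega

lemma dist_le_of_mem_support {v u w : V} (P : G.Walk v w) (hu : u ∈ P.support) :
    G.dist v u ≤ P.length :=
  (SimpleGraph.dist_le (P.takeUntil u hu)).trans (Walk.length_takeUntil_le P hu)

/-- A vertex at distance `j ≤ p-1` from `v` has at most one neighbour at distance `j-1`. -/
lemma unique_parent {p : ℕ} (hg : (2 * p : ℕ∞) ≤ G.egirth) {v u x₁ x₂ : V} {j : ℕ}
    (hj1 : 1 ≤ j) (hjp : j ≤ p - 1) (hp2 : 2 ≤ p)
    (hu : G.dist v u = j) (hx₁ : G.dist v x₁ = j - 1) (hx₂ : G.dist v x₂ = j - 1)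
    (h₁ : G.Adj x₁ u) (h₂ : G.Adj x₂ u) : x₁ = x₂ := by
  by_contra hne
  have hru : G.Reachable v u := Reachable.of_dist_ne_zero (by omega)
  have hr₁ : G.Reachable v x₁ := hru.trans h₁.symm.reachable
  have hr₂ : G.Reachable v x₂ := hru.trans h₂.symm.reachable
  obtain ⟨P₁, hP₁, hP₁l⟩ := hr₁.exists_path_of_dist
  obtain ⟨P₂, hP₂, hP₂l⟩ := hr₂.exists_path_of_dist
  rw [hx₁] at hP₁l
  rw [hx₂] at hP₂l
  have hu₁ : u ∉ P₁.support := fun hm => by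
    have := dist_le_of_mem_support P₁ hm; omega
  have hu₂ : u ∉ P₂.support := fun hm => by
    have := dist_le_of_mem_support P₂ hm; omega
  have hW₁ : (P₁.concat h₁).IsPath := isPath_concat hP₁ h₁ hu₁
  have hW₂ : (P₂.concat h₂).IsPath := isPath_concat hP₂ h₂ hu₂
  have hWne : P₁.concat h₁ ≠ P₂.concat h₂ := by
    intro he
    have hedg := congrArg Walk.edges he
    rw [Walk.edges_concat, Walk.edges_concat, List.concat_eq_append,
      List.concat_eq_append] at hedg
    have hl : P₁.edges.length = P₂.edges.length := by
      rw [Walk.length_edges, Walk.length_edges, hP₁l, hP₂l]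
    have h3 : [s(x₁, u)] = [s(x₂, u)] := (List.append_inj hedg hl).2
    simp only [List.cons.injEq] at h3
    rcases Sym2.eq_iff.mp h3.1 with ⟨h4, _⟩ | ⟨h4, _⟩
    · exact hne h4
    · exact h₁.ne h4
  have hB := girth_bound hg _ _ hW₁ hW₂ hWne
  rw [Walk.length_concat, Walk.length_concat, hP₁l, hP₂l] at hB
  omega

/-- Two distinct vertices at the same distance `i ≤ p-1` from `v` are non-adjacent. -/
lemma level_indep {p : ℕ} (hg : (2 * p : ℕ∞) ≤ G.egirth) {v u₁ u₂ : V} {i : ℕ}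
    (hi1 : 1 ≤ i) (hip : i ≤ p - 1) (hp2 : 2 ≤ p)
    (h₁ : G.dist v u₁ = i) (h₂ : G.dist v u₂ = i) (hne : u₁ ≠ u₂) : ¬ G.Adj u₁ u₂ := by
  intro hadj
  have hr₁ : G.Reachable v u₁ := Reachable.of_dist_ne_zero (by omega)
  have hr₂ : G.Reachable v u₂ := Reachable.of_dist_ne_zero (by omega)
  obtain ⟨P, hP, hPl⟩ := hr₁.exists_path_of_dist
  obtain ⟨Q, hQ, hQl⟩ := hr₂.exists_path_of_dist
  rw [h₁] at hPl
  rw [h₂] at hQl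
  have hu₂ : u₂ ∉ P.support := by
    intro hmem
    have h3 : (P.takeUntil u₂ hmem).length ≤ P.length := Walk.length_takeUntil_le P hmem
    have h4 : G.dist v u₂ ≤ (P.takeUntil u₂ hmem).length := SimpleGraph.dist_le _
    rw [h₂] at h4
    have h5 := congrArg Walk.length (Walk.take_spec P hmem)
    rw [Walk.length_append] at h5
    have h6 : (P.dropUntil u₂ hmem).length = 0 := by omega
    exact hne (endpoints_eq_of_length_zero _ h6).symm
  have hW : (P.concat hadj).IsPath := isPath_concat hP hadj hu₂
  have hWne : P.concat hadj ≠ Q := by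
    intro he
    have := congrArg Walk.length he
    rw [Walk.length_concat, hPl, hQl] at this
    omega
  have hB := girth_bound hg _ _ hW hQ hWne
  rw [Walk.length_concat, hPl, hQl] at hB
  omega

end MyGirthAux

open MyGirthAux Finset SimpleGraph in
/-- In a graph of girth at least `2p` (`p ≥ 2`) with minimum degree at least `d+1`
(`d ≥ 1` real), for any vertex `v` the distance levels `N_i` (`1 ≤ i ≤ p-1`) are
independent sets with `|N_i| ≥ d^(i-1)·(d+1)`. -/
theorem stmt2 {V : Type*} [Fintype V] (G : SimpleGraph V) [DecidableRel G.Adj]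
    (p : ℕ) (d : ℝ) (hp : 2 ≤ p) (hd : 1 ≤ d)
    (hgirth : (2 * p : ℕ∞) ≤ G.egirth)
    (hdeg : ∀ u : V, d + 1 ≤ (G.degree u : ℝ))
    (v : V) (i : ℕ) (hi1 : 1 ≤ i) (hip : i ≤ p - 1) :
    G.IsIndepSet' {u : V | G.dist v u = i} ∧
      d ^ (i - 1) * (d + 1) ≤ ({u : V | G.dist v u = i}.ncard : ℝ) := by
  classical
  have hd0 : (0 : ℝ) < d := by linarith
  constructor
  · intro u₁ hu₁ u₂ hu₂ hne
    exact level_indep hgirth hi1 hip hp hu₁ hu₂ hne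
  · have hset : ({u : V | G.dist v u = i}).ncard
        = (univ.filter fun u => G.dist v u = i).card := by
      rw [Set.ncard_eq_toFinset_card', Set.toFinset_setOf]
    rw [hset]
    clear hset
    induction i, hi1 using Nat.le_induction with
    | base =>
      have h1 : (univ.filter fun u => G.dist v u = 1) = G.neighborFinset v := by
        ext u
        simp [SimpleGraph.dist_eq_one_iff_adj]
      rw [h1]
      have h2 : (G.neighborFinset v).card = G.degree v := rfl
      rw [h2]
      simpa using hdeg v
    | succ n hn ih =>
      have hnp : n ≤ p - 1 := by omega
      have ihn : d ^ (n - 1) * (d + 1)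
          ≤ ((univ.filter fun u => G.dist v u = n).card : ℝ) := ih hnp
      set A : Finset V := univ.filter fun u => G.dist v u = n with hA
      set B : Finset V := univ.filter fun u => G.dist v u = n + 1 with hB
      set nbr : V → Finset V := fun x => G.neighborFinset x ∩ B with hnbr
      -- each vertex of A has at least d neighbours in B
      have hkey : ∀ x ∈ A, d ≤ ((nbr x).card : ℝ) := by
        intro x hx
        have hxd : G.dist v x = n := by
          simpa [hA] using hx
        have hrx : G.Reachable v x := Reachable.of_dist_ne_zero (by omega)
        -- every neighbour of x is at distance n-1 or n+1
        have hsplit : G.neighborFinset x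
            ⊆ (univ.filter fun u => G.dist v u = n - 1) ∪ nbr x := by
          intro y hy
          have hadj : G.Adj x y := by simpa using hy
          have hry : G.Reachable v y := hrx.trans hadj.reachable
          obtain ⟨W, hWl⟩ := hry.exists_walk_length_eq_dist
          have hup : G.dist v y ≤ n + 1 := by
            obtain ⟨Px, hPxl⟩ := hrx.exists_walk_length_eq_dist
            have := SimpleGraph.dist_le (Px.concat hadj)
            rw [Walk.length_concat, hPxl, hxd] at this
            exact this
          have hlow : n ≤ G.dist v y + 1 := by
            have := SimpleGraph.dist_le (W.concat hadj.symm)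
            rw [Walk.length_concat, hWl] at this
            omega
          have hney : G.dist v y ≠ n := by
            intro hyd
            exact level_indep hgirth hn hnp hp hxd hyd hadj.ne hadj
          have : G.dist v y = n - 1 ∨ G.dist v y = n + 1 := by omega
          rcases this with h | h
          · exact Finset.mem_union_left _ (by simp [h])
          · exact Finset.mem_union_right _ (by simp [hnbr, hB, hadj, h])
        have hone : ((univ.filter fun u => G.dist v u = n - 1) ∩ G.neighborFinset x).card ≤ 1 := by
          apply Finset.card_le_one.mpr
          intro y₁ hy₁ y₂ hy₂
          simp only [Finset.mem_inter, Finset.mem_filter, mem_neighborFinset] at hy₁ hy₂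
          exact unique_parent hgirth hn hnp hp hxd hy₁.1.2 hy₂.1.2 hy₁.2.symm hy₂.2.symm
        have hdegx : G.degree x ≤ 1 + (nbr x).card := by
          have h3 : G.neighborFinset x
              = ((univ.filter fun u => G.dist v u = n - 1) ∩ G.neighborFinset x)
                ∪ (nbr x) := by
            apply Finset.Subset.antisymm
            · intro y hy
              rcases Finset.mem_union.mp (hsplit hy) with h | h
              · exact Finset.mem_union_left _ (Finset.mem_inter.mpr ⟨h, hy⟩)
              · exact Finset.mem_union_right _ h
            · intro y hy
              rcases Finset.mem_union.mp hy with h | h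
              · exact (Finset.mem_inter.mp h).2
              · exact (Finset.mem_inter.mp h).1
          calc G.degree x = (G.neighborFinset x).card := rfl
            _ ≤ ((univ.filter fun u => G.dist v u = n - 1) ∩ G.neighborFinset x).card
                + (nbr x).card := by
                  rw [congrArg Finset.card h3]; exact Finset.card_union_le _ _
            _ ≤ 1 + (nbr x).card := by omega
        have := hdeg x
        have hcast : (G.degree x : ℝ) ≤ 1 + ((nbr x).card : ℝ) := by
          exact_mod_cast hdegx
        linarith
      -- the neighbour sets are pairwise disjoint
      have hdisj : ∀ x₁ ∈ A, ∀ x₂ ∈ A, x₁ ≠ x₂ → Disjoint (nbr x₁) (nbr x₂) := by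
        intro x₁ hx₁ x₂ hx₂ hne
        rw [Finset.disjoint_left]
        intro u hu1 hu2
        simp only [hnbr, Finset.mem_inter, mem_neighborFinset, hB, Finset.mem_filter] at hu1 hu2
        have hx₁d : G.dist v x₁ = n := by simpa [hA] using hx₁
        have hx₂d : G.dist v x₂ = n := by simpa [hA] using hx₂
        have hx₁d' : G.dist v x₁ = (n + 1) - 1 := by omega
        have hx₂d' : G.dist v x₂ = (n + 1) - 1 := by omega
        exact hne (unique_parent hgirth (by omega) (by omega) hp hu1.2.2 hx₁d' hx₂d'
          hu1.1 hu2.1)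
      have hcardsum : (A.biUnion nbr).card = ∑ x ∈ A, (nbr x).card :=
        Finset.card_biUnion hdisj
      have hsub : A.biUnion nbr ⊆ B := by
        intro u hu
        obtain ⟨x, _, hx⟩ := Finset.mem_biUnion.mp hu
        exact (Finset.mem_inter.mp hx).2
      have hBcard : (∑ x ∈ A, (nbr x).card : ℝ) ≤ (B.card : ℝ) := by
        have := Finset.card_le_card hsub
        rw [hcardsum] at this
        exact_mod_cast this
      have hsum : (A.card : ℝ) * d ≤ ∑ x ∈ A, ((nbr x).card : ℝ) := by
        calc (A.card : ℝ) * d = ∑ _x ∈ A, d := by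
              rw [Finset.sum_const, nsmul_eq_mul]
          _ ≤ ∑ x ∈ A, ((nbr x).card : ℝ) := Finset.sum_le_sum hkey
      have hfin : (A.card : ℝ) * d ≤ (B.card : ℝ) := hsum.trans hBcard
      have hpow : d ^ (n + 1 - 1) * (d + 1) = (d ^ (n - 1) * (d + 1)) * d := by
        have h4 : n - 1 + 1 = n := by omega
        rw [mul_right_comm, ← pow_succ, h4]
        norm_num
      rw [hpow]
      calc (d ^ (n - 1) * (d + 1)) * d ≤ (A.card : ℝ) * d := by
            apply mul_le_mul_of_nonneg_right ihn (le_of_lt hd0)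
        _ ≤ (B.card : ℝ) := hfin
end

section
/- Let G be a simple graph and let G' be obtained from G by replacing each edge of G by a path with q internal vertices, where q is even. Then G has an independent set of size at least s if and only if G' has an independent set of size at least |E(G)|·q/2 + s. -/
/-- A chosen first endpoint of an edge. -/
noncomputable def SimpleGraph.eFst {V : Type*} (G : SimpleGraph V) (e : G.edgeSet) : V :=
  (Quot.out (e : Sym2 V)).1

/-- A chosen second endpoint of an edge. -/
noncomputable def SimpleGraph.eSnd {V : Type*} (G : SimpleGraph V) (e : G.edgeSet) : V :=
  (Quot.out (e : Sym2 V)).2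

/-- The `q`-subdivision of `G`: every edge `e` of `G` is replaced by a path
`eFst e, (e,0), (e,1), …, (e,q-1), eSnd e` with `q` new internal vertices. -/
noncomputable def SimpleGraph.subdiv {V : Type*} (G : SimpleGraph V) (q : ℕ) :
    SimpleGraph (V ⊕ (G.edgeSet × Fin q)) :=
  SimpleGraph.fromRel (fun a b =>
    match a, b with
    | Sum.inl u, Sum.inr (e, i) =>
        ((i : ℕ) = 0 ∧ u = G.eFst e) ∨ ((i : ℕ) = q - 1 ∧ u = G.eSnd e)
    | Sum.inr (e, i), Sum.inr (e', j) => e = e' ∧ (j : ℕ) = (i : ℕ) + 1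
    | _, _ => False)


/- ### auxiliary lemmas -/

lemma aux_adj_endpoints {V : Type*} (G : SimpleGraph V) (e : G.edgeSet) :
    G.Adj (G.eFst e) (G.eSnd e) := by
  rw [← SimpleGraph.mem_edgeSet]
  have h : s((Quot.out (e : Sym2 V)).1, (Quot.out (e : Sym2 V)).2) = (e : Sym2 V) := Quot.out_eq _
  have h2 := e.2
  rw [← h] at h2
  simpa [SimpleGraph.eFst, SimpleGraph.eSnd, Sym2.mk] using h2

lemma aux_out_eq {V : Type*} (G : SimpleGraph V) (u v : V) (h : G.Adj u v) :
    (G.eFst ⟨s(u,v), h⟩ = u ∧ G.eSnd ⟨s(u,v), h⟩ = v) ∨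
    (G.eFst ⟨s(u,v), h⟩ = v ∧ G.eSnd ⟨s(u,v), h⟩ = u) := by
  have h2 : s((Quot.out (s(u,v))).1, (Quot.out (s(u,v))).2) = s(u,v) := Quot.out_eq _
  rw [show (Quot.out (s(u,v)) : V × V) = ((Quot.out s(u,v)).1, (Quot.out s(u,v)).2) from rfl,
      Sym2.eq_iff] at h2
  simpa [SimpleGraph.eFst, SimpleGraph.eSnd] using h2

lemma aux_path_bound {q : ℕ} (hq : Even q) (I : Finset (Fin q))
    (hI : ∀ i ∈ I, ∀ j ∈ I, (j : ℕ) ≠ (i : ℕ) + 1) : I.card ≤ q / 2 := by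
  obtain ⟨m, hm⟩ := hq
  have key := Finset.card_le_card_of_injOn (t := Finset.range (q / 2))
    (fun i : Fin q => (i : ℕ) / 2)
    (fun i hi => by
      simp only [Finset.mem_coe, Finset.mem_range]
      have := i.2; omega)
    (fun i hi j hj hij => by
      dsimp only at hij
      have h1 := hI i hi j hj
      have h2 := hI j hj i hi
      have : (i : ℕ) = (j : ℕ) := by omega
      exact Fin.ext this)
  simpa using key

lemma aux_path_bound' {q : ℕ} (hq : Even q) (hq0 : 0 < q) (I : Finset (Fin q))
    (hI : ∀ i ∈ I, ∀ j ∈ I, (j : ℕ) ≠ (i : ℕ) + 1)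
    (h0 : ∀ i ∈ I, (i : ℕ) ≠ 0) (h1 : ∀ i ∈ I, (i : ℕ) ≠ q - 1) :
    I.card + 1 ≤ q / 2 := by
  obtain ⟨m, hm⟩ := hq
  have key := Finset.card_le_card_of_injOn (t := Finset.range (q / 2 - 1))
    (fun i : Fin q => ((i : ℕ) - 1) / 2)
    (fun i hi => by
      simp only [Finset.mem_coe, Finset.mem_range]
      have := i.2
      have := h0 i hi
      have := h1 i hi
      omega)
    (fun i hi j hj hij => by
      dsimp only at hij
      have := hI i hi j hj
      have := hI j hj i hi
      have := h0 i hi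
      have := h0 j hj
      have : (i : ℕ) = (j : ℕ) := by omega
      exact Fin.ext this)
  simp only [Finset.card_range] at key
  omega

/-- `G` has an independent set of size at least `s` iff its `q`-subdivision (`q` even)
has an independent set of size at least `|E(G)|·q/2 + s`. -/
theorem stmt6 {V : Type*} [Fintype V] (G : SimpleGraph V) (q s : ℕ)
    (hq : Even q) (hq0 : 0 < q) :
    (∃ S : Set V, G.IsIndepSet' S ∧ s ≤ S.ncard) ↔
    (∃ S' : Set (V ⊕ (G.edgeSet × Fin q)), (G.subdiv q).IsIndepSet' S' ∧
      G.edgeSet.ncard * q / 2 + s ≤ S'.ncard) := by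
  classical
  obtain ⟨m, hm⟩ := hq
  have hdvd : 2 ∣ q := ⟨m, by omega⟩
  have hdiv : G.edgeSet.ncard * q / 2 = G.edgeSet.ncard * (q / 2) :=
    Nat.mul_div_assoc _ hdvd
  constructor
  · -- forward
    rintro ⟨S, hS, hcard⟩
    set off : G.edgeSet → ℕ := fun e => if G.eSnd e ∈ S then 0 else 1 with hoff
    have hoffle : ∀ e, off e ≤ 1 := fun e => by by_cases h : G.eSnd e ∈ S <;> simp [off, h]
    have hoff0 : ∀ e, off e = 0 → G.eSnd e ∈ S := fun e h => by
      by_contra hc; simp [off, hc] at h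
    have hoff1 : ∀ e, off e = 1 → G.eSnd e ∉ S := fun e h => by
      intro hc; simp [off, hc] at h
    have hbnd : ∀ (k : Fin (q / 2)) (e : G.edgeSet), 2 * (k : ℕ) + off e < q := by
      intro k e
      have := k.2
      have := hoffle e
      omega
    set F : G.edgeSet × Fin (q / 2) → G.edgeSet × Fin q :=
      fun p => (p.1, ⟨2 * (p.2 : ℕ) + off p.1, hbnd p.2 p.1⟩) with hF
    have hFinj : Function.Injective F := by
      rintro ⟨e, k⟩ ⟨e', k'⟩ h
      simp only [F, Prod.mk.injEq, Fin.mk.injEq] at h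
      obtain ⟨he, hk⟩ := h
      subst he
      have : (k : ℕ) = (k' : ℕ) := by omega
      exact Prod.ext rfl (Fin.ext this)
    -- not both endpoints in S
    have hboth : ∀ e : G.edgeSet, ¬(G.eFst e ∈ S ∧ G.eSnd e ∈ S) := by
      rintro e ⟨h1, h2⟩
      exact hS h1 h2 (aux_adj_endpoints G e).ne (aux_adj_endpoints G e)
    refine ⟨Sum.inl '' S ∪ Sum.inr '' Set.range F, ?_, ?_⟩
    · -- independence
      intro a ha b hb hab hadj
      simp only [SimpleGraph.subdiv, SimpleGraph.fromRel_adj] at hadj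
      obtain ⟨-, hadj⟩ := hadj
      have key : ∀ (x y : V ⊕ (G.edgeSet × Fin q)),
          x ∈ Sum.inl '' S ∪ Sum.inr '' Set.range F →
          y ∈ Sum.inl '' S ∪ Sum.inr '' Set.range F →
          ¬ (match x, y with
            | Sum.inl u, Sum.inr (e, i) =>
                ((i : ℕ) = 0 ∧ u = G.eFst e) ∨ ((i : ℕ) = q - 1 ∧ u = G.eSnd e)
            | Sum.inr (e, i), Sum.inr (e', j) => e = e' ∧ (j : ℕ) = (i : ℕ) + 1
            | _, _ => False) := by
        rintro x y (⟨u, hu, rfl⟩ | ⟨_, ⟨⟨e₀, k⟩, rfl⟩, rfl⟩) hy <;>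
          rcases hy with ⟨v, hv, rfl⟩ | ⟨_, ⟨⟨e₁, k'⟩, rfl⟩, rfl⟩ <;>
            simp only [hF] <;> intro h
        · exact h
        · rcases h with ⟨hi, rfl⟩ | ⟨hi, rfl⟩
          · -- i = 0, u = eFst
            have hoffz : off e₁ = 0 := by
              have := hoffle e₁; omega
            exact hboth e₁ ⟨hu, hoff0 e₁ hoffz⟩
          · -- i = q-1, u = eSnd
            have hoffo : off e₁ = 1 := by
              have := hoffle e₁; have := k'.2; omega
            exact hoff1 e₁ hoffo hu
        · exact h
        · obtain ⟨rfl, hk⟩ := h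
          omega
      rcases hadj with h | h
      · exact key a b ha hb h
      · exact key b a hb ha h
    · -- cardinality
      have hdisj : Disjoint (Sum.inl '' S : Set (V ⊕ (G.edgeSet × Fin q)))
          (Sum.inr '' Set.range F) := by
        rw [Set.disjoint_left]
        rintro x ⟨u, -, rfl⟩ ⟨p, -, h⟩
        exact Sum.inl_ne_inr h.symm
      rw [Set.ncard_union_eq hdisj (Set.toFinite _) (Set.toFinite _),
          Set.ncard_image_of_injective _ Sum.inl_injective,
          Set.ncard_image_of_injective _ Sum.inr_injective,
          ← Set.image_univ, Set.ncard_image_of_injective _ hFinj,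
          Set.ncard_univ, Nat.card_prod, Nat.card_eq_fintype_card (α := Fin (q/2)),
          Fintype.card_fin, Nat.card_coe_set_eq, hdiv]
      omega
  · -- backward
    rintro ⟨S', hS', hcard⟩
    set T : Set V := {u | Sum.inl u ∈ S'} with hT
    set I : G.edgeSet → Finset (Fin q) :=
      fun e => Finset.univ.filter (fun i => Sum.inr (e, i) ∈ S') with hI
    -- independence facts
    have hmemI : ∀ e i, i ∈ I e ↔ Sum.inr (e, i) ∈ S' := by
      intro e i; simp [hI]
    have hcons : ∀ e, ∀ i ∈ I e, ∀ j ∈ I e, (j : ℕ) ≠ (i : ℕ) + 1 := by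
      intro e i hi j hj hji
      have hadj : (G.subdiv q).Adj (Sum.inr (e, i)) (Sum.inr (e, j)) := by
        simp only [SimpleGraph.subdiv, SimpleGraph.fromRel_adj]
        exact ⟨by simp [Prod.ext_iff, Fin.ext_iff]; omega, by tauto⟩
      exact hS' ((hmemI e i).1 hi) ((hmemI e j).1 hj) hadj.ne hadj
    have h0 : ∀ e, G.eFst e ∈ T → ∀ i ∈ I e, (i : ℕ) ≠ 0 := by
      intro e he i hi hi0
      have hadj : (G.subdiv q).Adj (Sum.inl (G.eFst e)) (Sum.inr (e, i)) := by
        simp only [SimpleGraph.subdiv, SimpleGraph.fromRel_adj]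
        refine ⟨by simp, Or.inl ?_⟩
        tauto
      exact hS' he ((hmemI e i).1 hi) hadj.ne hadj
    have h1 : ∀ e, G.eSnd e ∈ T → ∀ i ∈ I e, (i : ℕ) ≠ q - 1 := by
      intro e he i hi hi1
      have hadj : (G.subdiv q).Adj (Sum.inl (G.eSnd e)) (Sum.inr (e, i)) := by
        simp only [SimpleGraph.subdiv, SimpleGraph.fromRel_adj]
        refine ⟨by simp, Or.inl ?_⟩
        tauto
      exact hS' he ((hmemI e i).1 hi) hadj.ne hadj
    set bad : Set G.edgeSet := {e | G.eFst e ∈ T ∧ G.eSnd e ∈ T} with hbad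
    -- per edge bound
    have hedge : ∀ e : G.edgeSet, (I e).card + (if e ∈ bad then 1 else 0) ≤ q / 2 := by
      intro e
      by_cases hb : e ∈ bad
      · simp only [hb, if_pos]
        exact aux_path_bound' ⟨m, hm⟩ hq0 (I e) (hcons e) (h0 e hb.1) (h1 e hb.2)
      · simp only [hb, if_neg, not_false_iff, add_zero]
        exact aux_path_bound ⟨m, hm⟩ (I e) (hcons e)
    -- decompose S'
    have hB : Set.ncard (Sum.inr ⁻¹' S' : Set (G.edgeSet × Fin q)) =
        ∑ e : G.edgeSet, (I e).card := by
      rw [Set.ncard_eq_toFinset_card']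
      rw [Finset.card_eq_sum_card_fiberwise
        (f := Prod.fst) (t := Finset.univ) (fun x _ => Finset.mem_univ _)]
      refine Finset.sum_congr rfl fun e _ => ?_
      refine Finset.card_bij' (fun p _ => p.2) (fun i _ => (e, i)) ?_ ?_ ?_ ?_
      · rintro ⟨e', i⟩ hp
        simp only [Set.mem_toFinset, Set.mem_preimage, Finset.mem_filter,
          Finset.mem_univ, true_and] at hp ⊢
        obtain ⟨hmem, rfl⟩ := hp
        simpa [hI] using hmem
      · intro i hi
        simp only [hI, Finset.mem_filter, Finset.mem_univ, true_and] at hi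
        simp only [Set.mem_toFinset, Set.mem_preimage, Finset.mem_filter,
          Finset.mem_univ, true_and]
        exact ⟨hi, by simp⟩
      · rintro ⟨e', i⟩ hp
        simp only [Set.mem_toFinset, Finset.mem_filter] at hp
        simp [hp.2]
      · intro i hi; rfl
    have hsplit : S'.ncard ≤ T.ncard + ∑ e : G.edgeSet, (I e).card := by
      rw [← hB]
      have hsub : S' ⊆ Sum.inl '' T ∪ Sum.inr '' (Sum.inr ⁻¹' S') := by
        rintro (u | p) h
        · exact Or.inl ⟨u, h, rfl⟩
        · exact Or.inr ⟨p, h, rfl⟩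
      calc S'.ncard ≤ (Sum.inl '' T ∪ Sum.inr '' (Sum.inr ⁻¹' S')).ncard :=
            Set.ncard_le_ncard hsub (Set.toFinite _)
        _ ≤ (Sum.inl '' T : Set (V ⊕ (G.edgeSet × Fin q))).ncard
            + (Sum.inr '' (Sum.inr ⁻¹' S') : Set (V ⊕ (G.edgeSet × Fin q))).ncard :=
            Set.ncard_union_le _ _
        _ = T.ncard + (Sum.inr ⁻¹' S' : Set (G.edgeSet × Fin q)).ncard := by
            rw [Set.ncard_image_of_injective _ Sum.inl_injective,
                Set.ncard_image_of_injective _ Sum.inr_injective]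
    -- sum bound
    have hsum : (∑ e : G.edgeSet, (I e).card) + bad.ncard ≤ G.edgeSet.ncard * (q / 2) := by
      have h1' : (∑ e : G.edgeSet, (I e).card) + bad.ncard =
          ∑ e : G.edgeSet, ((I e).card + (if e ∈ bad then 1 else 0)) := by
        rw [Finset.sum_add_distrib]
        congr 1
        rw [Finset.sum_boole, Nat.cast_id, Set.ncard_eq_toFinset_card']
        congr 1
        ext e
        simp [hbad]
      rw [h1']
      calc ∑ e : G.edgeSet, ((I e).card + (if e ∈ bad then 1 else 0))
          ≤ ∑ _e : G.edgeSet, (q / 2) := Finset.sum_le_sum fun e _ => hedge e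
        _ = Fintype.card G.edgeSet * (q / 2) := by
            rw [Finset.sum_const, Finset.card_univ, smul_eq_mul]
        _ = G.edgeSet.ncard * (q / 2) := by
            rw [← Nat.card_coe_set_eq, Nat.card_eq_fintype_card]
    -- hence T is big
    have hTbig : s + bad.ncard ≤ T.ncard := by
      rw [hdiv] at hcard
      omega
    -- final independent set
    refine ⟨T \ (G.eFst '' bad), ?_, ?_⟩
    · intro u hu v hv huv hadj
      have hout := aux_out_eq G u v hadj
      set e : G.edgeSet := ⟨s(u,v), hadj⟩ with he
      have hbadmem : e ∈ bad := by
        rcases hout with ⟨ha, hb⟩ | ⟨ha, hb⟩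
        · exact ⟨ha ▸ hu.1, hb ▸ hv.1⟩
        · exact ⟨ha ▸ hv.1, hb ▸ hu.1⟩
      have himg : G.eFst e ∈ G.eFst '' bad := ⟨e, hbadmem, rfl⟩
      rcases hout with ⟨ha, -⟩ | ⟨ha, -⟩
      · exact hu.2 (ha ▸ himg)
      · exact hv.2 (ha ▸ himg)
    · have h1' : T.ncard ≤ (T \ (G.eFst '' bad)).ncard + (G.eFst '' bad).ncard :=
        Set.ncard_le_ncard_diff_add_ncard _ _ (Set.toFinite _)
      have h2' : (G.eFst '' bad).ncard ≤ bad.ncard := Set.ncard_image_le (Set.toFinite _)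
      omega
end

section
/- Let q be even and let P = (x_0, x_1, ..., x_q, x_{q+1}) be a path on q+2 vertices. Any independent set of P containing both endpoints x_0 and x_{q+1} has the property that there exists an odd index i with 1 ≤ i ≤ q such that neither x_i nor x_{i+1} is in the set. -/
open Fin.NatCast

/-- Let `q` be even and `P` the path on vertices `x_0, …, x_{q+1}`. Any independent set
of `P` containing both endpoints misses two consecutive vertices `x_i, x_{i+1}` for
some odd `1 ≤ i ≤ q`. -/
theorem stmt8 (q : ℕ) (hq : Even q)
    (S : Set (Fin (q + 2)))
    (hS : (SimpleGraph.pathGraph (q + 2)).IsIndepSet' S)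
    (h0 : (0 : Fin (q + 2)) ∈ S) (hlast : (Fin.last (q + 1)) ∈ S) :
    ∃ i : ℕ, Odd i ∧ 1 ≤ i ∧ i ≤ q ∧
      ((i : Fin (q + 2)) ∉ S ∧ ((i + 1 : ℕ) : Fin (q + 2)) ∉ S) := by
  by_contra hcon
  push_neg at hcon
  -- Claim: for all k with 2*k ≤ q, the vertex 2*k is in S.
  have key : ∀ k : ℕ, 2 * k ≤ q → ((2 * k : ℕ) : Fin (q + 2)) ∈ S := by
    intro k
    induction k with
    | zero => intro _; simpa using h0
    | succ k ih =>
      intro hk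
      have hk' : 2 * k ≤ q := by omega
      have hmem := ih hk'
      -- 2*k+1 is not in S since it's adjacent to 2*k
      have hval : ∀ m : ℕ, m ≤ q + 1 → ((m : Fin (q + 2)) : ℕ) = m := by
        intro m hm
        rw [Fin.val_natCast]
        exact Nat.mod_eq_of_lt (by omega)
      have hadj : (SimpleGraph.pathGraph (q + 2)).Adj ((2 * k : ℕ) : Fin (q + 2))
          ((2 * k + 1 : ℕ) : Fin (q + 2)) := by
        rw [SimpleGraph.pathGraph_adj, hval _ (by omega), hval _ (by omega)]
        left; rfl
      have hne : ((2 * k : ℕ) : Fin (q + 2)) ≠ ((2 * k + 1 : ℕ) : Fin (q + 2)) := by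
        exact (SimpleGraph.pathGraph (q + 2)).ne_of_adj hadj
      have hnot : ((2 * k + 1 : ℕ) : Fin (q + 2)) ∉ S := by
        intro hmem'
        exact hS hmem hmem' hne hadj
      have hodd : Odd (2 * k + 1) := ⟨k, by ring⟩
      have := hcon (2 * k + 1) hodd (by omega) (by omega)
      rcases Classical.em (((2 * k + 1 : ℕ) : Fin (q + 2)) ∈ S) with h | h
      · exact absurd h hnot
      · have h2 := this h
        have he : (2 * (k + 1) : ℕ) = 2 * k + 1 + 1 := by ring
        rw [he]
        exact h2
  obtain ⟨m, hm⟩ := hq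
  have hqS : ((q : ℕ) : Fin (q + 2)) ∈ S := by
    have := key m (by omega)
    have h2m : 2 * m = q := by omega
    rwa [h2m] at this
  -- q and q+1 = last are adjacent, both in S: contradiction
  have hval : ((q : ℕ) : Fin (q + 2)) = ⟨q, by omega⟩ := by
    ext
    rw [Fin.val_natCast]
    exact Nat.mod_eq_of_lt (by omega)
  have hadj : (SimpleGraph.pathGraph (q + 2)).Adj ((q : ℕ) : Fin (q + 2)) (Fin.last (q + 1)) := by
    rw [SimpleGraph.pathGraph_adj, hval]
    left; rfl
  exact hS hqS hlast ((SimpleGraph.pathGraph (q + 2)).ne_of_adj hadj) hadj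
end

section
/- Let q be an even positive integer and let G' be the q-subdivision of a simple graph G. If S' is an independent set of G' of size |E(G)|·q/2 + s that contains both endpoints of some original edge of G, then there exists an independent set S'' of G' of the same size containing strictly fewer 'conflicting' original edges (edges of G with both endpoints in the independent set). -/
namespace SimpleGraph
variable {V : Type*} (G : SimpleGraph V) {q : ℕ}

lemma subdiv_adj_inl_inl' (u w : V) : ¬ (G.subdiv q).Adj (Sum.inl u) (Sum.inl w) := by
  simp [subdiv, fromRel_adj]

lemma subdiv_adj_inl_inr' (w : V) (e : G.edgeSet) (i : Fin q) :
    (G.subdiv q).Adj (Sum.inl w) (Sum.inr (e, i)) ↔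
      ((i : ℕ) = 0 ∧ w = G.eFst e) ∨ ((i : ℕ) = q - 1 ∧ w = G.eSnd e) := by
  simp [subdiv, fromRel_adj]

lemma subdiv_adj_inr_inr' (e e' : G.edgeSet) (i i' : Fin q) :
    (G.subdiv q).Adj (Sum.inr (e, i)) (Sum.inr (e', i')) ↔
      e = e' ∧ ((i' : ℕ) = (i : ℕ) + 1 ∨ (i : ℕ) = (i' : ℕ) + 1) := by
  rw [subdiv, fromRel_adj]
  constructor
  · rintro ⟨hne, h | h⟩
    · exact ⟨h.1, Or.inl h.2⟩
    · exact ⟨h.1.symm, Or.inr h.2⟩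
  · rintro ⟨rfl, h | h⟩
    · refine ⟨?_, Or.inl ⟨rfl, h⟩⟩
      simp only [ne_eq, Sum.inr.injEq, Prod.mk.injEq, true_and]
      intro hii; rw [hii] at h; omega
    · refine ⟨?_, Or.inr ⟨rfl, h⟩⟩
      simp only [ne_eq, Sum.inr.injEq, Prod.mk.injEq, true_and]
      intro hii; rw [hii] at h; omega

end SimpleGraph

/-- Exchange lemma: if an independent set `S'` of the `q`-subdivision (`q` even positive)
of size `|E(G)|·q/2 + s` contains both endpoints of some original edge, there is an
independent set of the same size with strictly fewer conflicting original edges. -/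
theorem stmt19 {V : Type*} [Fintype V] (G : SimpleGraph V) (q s : ℕ)
    (hq : Even q) (hq0 : 0 < q)
    (S' : Set (V ⊕ (G.edgeSet × Fin q)))
    (hind : (G.subdiv q).IsIndepSet' S')
    (hsize : S'.ncard = G.edgeSet.ncard * q / 2 + s)
    (hconf : ∃ e : G.edgeSet, ∀ v ∈ (e : Sym2 V), Sum.inl v ∈ S') :
    ∃ S'' : Set (V ⊕ (G.edgeSet × Fin q)),
      (G.subdiv q).IsIndepSet' S'' ∧ S''.ncard = S'.ncard ∧
      {e : G.edgeSet | ∀ v ∈ (e : Sym2 V), Sum.inl v ∈ S''}.ncard <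
        {e : G.edgeSet | ∀ v ∈ (e : Sym2 V), Sum.inl v ∈ S'}.ncard := by
  classical
  obtain ⟨e, he⟩ := hconf
  have huS : Sum.inl (G.eFst e) ∈ S' := he _ (Sym2.out_fst_mem _)
  have hvS : Sum.inl (G.eSnd e) ∈ S' := he _ (Sym2.out_snd_mem _)
  obtain ⟨c, hc⟩ := hq
  set g : ℕ → (V ⊕ (G.edgeSet × Fin q)) :=
    fun k => Sum.inr (e, ⟨k % q, Nat.mod_lt k hq0⟩) with hg
  have hgInj : ∀ {k k' : ℕ}, k < q → k' < q → g k = g k' → k = k' := by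
    intro k k' hk hk' h
    simp only [hg, Sum.inr.injEq, Prod.mk.injEq, Fin.mk.injEq, true_and] at h
    rwa [Nat.mod_eq_of_lt hk, Nat.mod_eq_of_lt hk'] at h
  have hind' : ∀ x ∈ S', ∀ y ∈ S', ¬ (G.subdiv q).Adj x y := by
    intro x hx y hy hadj
    rcases eq_or_ne x y with rfl | hne
    · exact (G.subdiv q).loopless.irrefl x hadj
    · exact hind hx hy hne hadj
  have hadj_consec : ∀ k, k + 1 < q → (G.subdiv q).Adj (g k) (g (k + 1)) := by
    intro k hk
    simp only [hg]
    rw [G.subdiv_adj_inr_inr']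
    refine ⟨rfl, Or.inl ?_⟩
    simp [Nat.mod_eq_of_lt (show k < q by omega), Nat.mod_eq_of_lt hk]
  have hadj_u0 : (G.subdiv q).Adj (Sum.inl (G.eFst e)) (g 0) := by
    simp only [hg]
    rw [G.subdiv_adj_inl_inr']
    exact Or.inl ⟨by simp, rfl⟩
  have hadj_vlast : (G.subdiv q).Adj (Sum.inl (G.eSnd e)) (g (q - 1)) := by
    simp only [hg]
    rw [G.subdiv_adj_inl_inr']
    exact Or.inr ⟨by simp [Nat.mod_eq_of_lt (show q - 1 < q by omega)], rfl⟩
  have h0notS : g 0 ∉ S' := fun hmem => hind' _ huS _ hmem hadj_u0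
  have key : ∃ j, j % 2 = 0 ∧ j + 1 < q ∧ g j ∉ S' ∧ g (j + 1) ∉ S' := by
    by_contra hcon
    push_neg at hcon
    have hodd : ∀ m, 2 * m + 1 < q → g (2 * m + 1) ∈ S' := by
      intro m
      induction m with
      | zero =>
        intro h1
        simpa using hcon 0 (by omega) (by omega) (by simpa using h0notS)
      | succ n ih =>
        intro hlt
        have h1 : g (2 * n + 1) ∈ S' := ih (by omega)
        have h2 : g (2 * n + 2) ∉ S' := fun hmem =>
          hind' _ h1 _ hmem (hadj_consec _ (by omega))
        have h3 := hcon (2 * n + 2) (by omega) (by omega) h2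
        rw [show 2 * (n + 1) + 1 = 2 * n + 2 + 1 by ring]
        exact h3
    have hlast : g (q - 1) ∈ S' := by
      have h4 := hodd (c - 1) (by omega)
      rwa [show 2 * (c - 1) + 1 = q - 1 by omega] at h4
    exact hind' _ hvS _ hlast hadj_vlast
  set j := Nat.find key with hj
  obtain ⟨hjeven, hjq, hjS, hj1S⟩ := Nat.find_spec key
  have hmin : ∀ k, k < j → k % 2 = 0 → k + 1 < q → g k ∉ S' → g (k + 1) ∈ S' := by
    intro k hk h1 h2 h3
    have h4 := Nat.find_min key hk
    push_neg at h4
    exact h4 h1 h2 h3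
  have chain : ∀ m, 2 * m ≤ j → g (2 * m) ∉ S' ∧ (2 * m < j → g (2 * m + 1) ∈ S') := by
    intro m
    induction m with
    | zero =>
      intro _
      refine ⟨by simpa using h0notS, fun h0j => ?_⟩
      simpa using hmin 0 (by omega) (by omega) (by omega) (by simpa using h0notS)
    | succ n ih =>
      intro hle
      have h1 : g (2 * n + 1) ∈ S' := (ih (by omega)).2 (by omega)
      have h2 : g (2 * n + 2) ∉ S' := fun hmem =>
        hind' _ h1 _ hmem (hadj_consec _ (by omega))
      have h2' : g (2 * (n + 1)) ∉ S' := by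
        rw [show 2 * (n + 1) = 2 * n + 2 by ring]; exact h2
      refine ⟨h2', fun hlt => ?_⟩
      have h3 := hmin (2 * n + 2) (by omega) (by omega) (by omega) h2
      rw [show 2 * (n + 1) + 1 = 2 * n + 2 + 1 by ring]
      exact h3
  set t := j / 2 with ht
  have hjt : j = 2 * t := by omega
  set R : Set (V ⊕ (G.edgeSet × Fin q)) :=
    insert (Sum.inl (G.eFst e)) ((fun m => g (2 * m + 1)) '' Set.Iio t) with hR
  set A : Set (V ⊕ (G.edgeSet × Fin q)) := (fun m => g (2 * m)) '' Set.Iic t with hA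
  have hAnotS : ∀ x ∈ A, x ∉ S' := by
    rintro x ⟨m, hm, rfl⟩
    exact (chain m (by simp only [Set.mem_Iic] at hm; omega)).1
  have hRsubS : R ⊆ S' := by
    rintro x (rfl | ⟨m, hm, rfl⟩)
    · exact huS
    · simp only [Set.mem_Iio] at hm
      exact (chain m (by omega)).2 (by omega)
  -- The exchanged set
  refine ⟨(S' \ R) ∪ A, ?_, ?_, ?_⟩
  · -- independence
    have hnbA : ∀ m, m ≤ t → ∀ x ∈ (S' \ R) ∪ A, ¬ (G.subdiv q).Adj x (g (2 * m)) := by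
      intro m hm x hx hadj
      have h2m : 2 * m < q := by omega
      rcases x with w | ⟨e', i⟩
      · simp only [hg] at hadj
        rw [G.subdiv_adj_inl_inr'] at hadj
        rcases hadj with ⟨hi, rfl⟩ | ⟨hi, rfl⟩
        · rcases hx with ⟨-, hxR⟩ | hxA
          · exact hxR (Set.mem_insert _ _)
          · obtain ⟨m', -, habs⟩ := hxA
            simp [hg] at habs
        · simp only [Fin.val_mk, Nat.mod_eq_of_lt h2m] at hi
          omega
      · simp only [hg] at hadj
        rw [G.subdiv_adj_inr_inr'] at hadj
        obtain ⟨hee, hcase⟩ := hadj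
        subst e'
        simp only [Fin.val_mk, Nat.mod_eq_of_lt h2m] at hcase
        rcases hcase with hcase | hcase
        · -- (2m) = i + 1, so x = g (2(m-1)+1) ∈ R
          have hm1 : 1 ≤ m := by omega
          have hx_eq : (Sum.inr (e, i) : V ⊕ (G.edgeSet × Fin q)) = g (2 * (m - 1) + 1) := by
            simp only [hg, Sum.inr.injEq, Prod.mk.injEq, true_and]
            rw [Fin.ext_iff]
            simp only [Fin.val_mk, Nat.mod_eq_of_lt (show 2 * (m - 1) + 1 < q by omega)]
            omega
          rcases hx with ⟨-, hxR⟩ | hxA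
          · exact hxR (Set.mem_insert_iff.mpr (Or.inr ⟨m - 1, Set.mem_Iio.mpr (by omega), hx_eq.symm⟩))
          · obtain ⟨m'', hm'', habs⟩ := hxA
            simp only [Set.mem_Iic] at hm''
            have := hgInj (by omega) (by omega) (habs.trans hx_eq)
            omega
        · -- i = 2m + 1
          have hiq : 2 * m + 1 < q := by omega
          have hx_eq : (Sum.inr (e, i) : V ⊕ (G.edgeSet × Fin q)) = g (2 * m + 1) := by
            simp only [hg, Sum.inr.injEq, Prod.mk.injEq, true_and]
            rw [Fin.ext_iff]
            simp only [Fin.val_mk, Nat.mod_eq_of_lt hiq]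
            omega
          rcases Nat.lt_or_ge (2 * m) j with hlt | hge
          · rcases hx with ⟨-, hxR⟩ | hxA
            · exact hxR (Set.mem_insert_iff.mpr (Or.inr ⟨m, Set.mem_Iio.mpr (by omega), hx_eq.symm⟩))
            · obtain ⟨m'', hm'', habs⟩ := hxA
              simp only [Set.mem_Iic] at hm''
              have := hgInj (by omega) (by omega) (habs.trans hx_eq)
              omega
          · have hje : 2 * m = j := by omega
            rcases hx with ⟨hxS, -⟩ | hxA
            · rw [hx_eq] at hxS
              rw [show 2 * m + 1 = j + 1 by omega] at hxS
              exact hj1S hxS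
            · obtain ⟨m'', hm'', habs⟩ := hxA
              simp only [Set.mem_Iic] at hm''
              have := hgInj (by omega) (by omega) (habs.trans hx_eq)
              omega
    intro x hx y hy hne hadj
    rcases hy with hyd | hyA
    · rcases hx with hxd | hxA
      · exact hind' x hxd.1 y hyd.1 hadj
      · obtain ⟨m, hm, rfl⟩ := hxA
        exact hnbA m (Set.mem_Iic.mp hm) y (Or.inl hyd) hadj.symm
    · obtain ⟨m, hm, rfl⟩ := hyA
      exact hnbA m (Set.mem_Iic.mp hm) x hx hadj
  · -- cardinality
    have hRcard : R.ncard = t + 1 := by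
      rw [hR]
      rw [Set.ncard_insert_of_notMem (by rintro ⟨m, -, habs⟩; simp [hg] at habs)]
      rw [Set.ncard_image_of_injOn (fun m hm m' hm' hmm => by
        simp only [Set.mem_Iio] at hm hm'
        have := hgInj (show 2 * m + 1 < q by omega) (show 2 * m' + 1 < q by omega) hmm
        omega)]
      rw [← Finset.coe_range, Set.ncard_coe_finset, Finset.card_range]
    have hAcard : A.ncard = t + 1 := by
      rw [hA]
      rw [Set.ncard_image_of_injOn (fun m hm m' hm' hmm => by
        simp only [Set.mem_Iic] at hm hm'
        have := hgInj (show 2 * m < q by omega) (show 2 * m' < q by omega) hmm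
        omega)]
      rw [← Finset.coe_Iic, Set.ncard_coe_finset, Nat.card_Iic]
    have hdisj : Disjoint (S' \ R) A := by
      rw [Set.disjoint_right]
      intro x hxA hxd
      exact hAnotS x hxA hxd.1
    rw [Set.ncard_union_eq hdisj (Set.toFinite _) (Set.toFinite _),
      Set.ncard_diff hRsubS (Set.toFinite _), hRcard, hAcard]
    have hle : R.ncard ≤ S'.ncard := Set.ncard_le_ncard hRsubS (Set.toFinite _)
    omega
  · -- fewer conflicts
    have hinl : ∀ w : V, Sum.inl w ∈ (S' \ R) ∪ A ↔ (Sum.inl w ∈ S' ∧ w ≠ G.eFst e) := by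
      intro w
      constructor
      · rintro (⟨hS, hR'⟩ | hA')
        · refine ⟨hS, fun h => hR' ?_⟩
          rw [h]; exact Set.mem_insert _ _
        · obtain ⟨m, -, habs⟩ := hA'
          simp [hg] at habs
      · rintro ⟨hS, hne⟩
        refine Or.inl ⟨hS, ?_⟩
        rintro (h | ⟨m, -, habs⟩)
        · exact hne (by injection h)
        · simp [hg] at habs
    have hsub : {f : G.edgeSet | ∀ w ∈ (f : Sym2 V), Sum.inl w ∈ (S' \ R) ∪ A} ⊆
        {f : G.edgeSet | ∀ w ∈ (f : Sym2 V), Sum.inl w ∈ S'} := by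
      intro f hf w hw
      exact ((hinl w).mp (hf w hw)).1
    refine Set.ncard_lt_ncard ?_ (Set.toFinite _)
    rw [Set.ssubset_iff_of_subset hsub]
    refine ⟨e, he, fun habs => ?_⟩
    exact ((hinl (G.eFst e)).mp (habs (G.eFst e) (Sym2.out_fst_mem _))).2 rfl
end
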